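/- arXiv:2001.01475 — 2 statements merged into one kernel-verified Lean document; each statement's English description precedes it below -/
import Mathlib

section
/- Let n ≥ 1, s ∈ (0,1/2), Ω ⊂ ℝⁿ a bounded domain, and W a double-well potential. Suppose u_ε ∈ X converges to u in L¹_loc(ℝⁿ) as ε → 0⁺ and liminf_{ε→0⁺} F^int_ε(u_ε,Ω) < +∞. Then u(x) ∈ {−1, 1} for almost every x ∈ Ω, i.e. u = χ_E − χ_{ℝⁿ∖E} a.e. in Ω for some measurable set E ⊂ ℝⁿ, and moreover liminf_{ε→0⁺} F^int_ε(u_ε,Ω) ≥ Per_s^int(E,Ω). -/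
open MeasureTheory Filter Topology Metric Set
open scoped ENNReal NNReal RealInnerProductSpace

noncomputable section

/-- `ℝⁿ` with the Euclidean structure. -/
abbrev Rn (n : ℕ) := EuclideanSpace ℝ (Fin n)

/-- A double-well potential with wells at `±1`. -/
def DoubleWell (W : ℝ → ℝ) : Prop :=
  ContDiff ℝ 2 W ∧ (∀ t, 0 ≤ W t) ∧ W 1 = 0 ∧ W (-1) = 0 ∧
    (∀ t, t ≠ 1 → t ≠ -1 → 0 < W t) ∧
    deriv W 1 = 0 ∧ deriv W (-1) = 0 ∧
    0 < iteratedDeriv 2 W 1 ∧ 0 < iteratedDeriv 2 W (-1)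

/-- Membership in `X = {u ∈ L^∞(ℝⁿ) : ‖u‖_∞ ≤ 1}`. -/
def memX (n : ℕ) (u : Rn n → ℝ) : Prop :=
  Measurable u ∧ ∀ᵐ x ∂(volume : Measure (Rn n)), |u x| ≤ 1

/-- Convergence `u_ε → u₀` in `L¹_loc(ℝⁿ)` as `ε → 0⁺`. -/
def TendstoL1loc (n : ℕ) (u : ℝ → Rn n → ℝ) (u₀ : Rn n → ℝ) : Prop :=
  ∀ K : Set (Rn n), IsCompact K →
    Tendsto (fun ε => ∫⁻ x in K, ENNReal.ofReal |u ε x - u₀ x| ∂volume)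
      (𝓝[>] (0:ℝ)) (𝓝 0)

/-- Interior interaction kernel `K^int(u,Ω)`. -/
def Kint (n : ℕ) (s : ℝ) (u : Rn n → ℝ) (Ω : Set (Rn n)) : ℝ≥0∞ :=
  ∫⁻ x in Ω, ∫⁻ y in Ω, ENNReal.ofReal (|u x - u y| ^ 2 / ‖x - y‖ ^ ((n : ℝ) + 2 * s))

/-- Exterior interaction kernel `K^ext(u,Ω)`. -/
def Kext (n : ℕ) (s : ℝ) (u : Rn n → ℝ) (Ω : Set (Rn n)) : ℝ≥0∞ :=
  2 * ∫⁻ x in Ω, ∫⁻ y in Ωᶜ, ENNReal.ofReal (|u x - u y| ^ 2 / ‖x - y‖ ^ ((n : ℝ) + 2 * s))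

/-- Potential term `∫_Ω W(u)`. -/
def PotTerm (n : ℕ) (W : ℝ → ℝ) (u : Rn n → ℝ) (Ω : Set (Rn n)) : ℝ≥0∞ :=
  ∫⁻ x in Ω, ENNReal.ofReal (W (u x))

/-- `F^int_ε` for `s ∈ (0,1/2)`. -/
def Fint (n : ℕ) (s : ℝ) (W : ℝ → ℝ) (ε : ℝ) (u : Rn n → ℝ) (Ω : Set (Rn n)) : ℝ≥0∞ :=
  Kint n s u Ω + ENNReal.ofReal (ε ^ (-(2 * s)) / 2) * PotTerm n W u Ω

/-- `F^ext_ε` for `s ∈ (0,1/2)`. -/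
def Fext (n : ℕ) (s : ℝ) (W : ℝ → ℝ) (ε : ℝ) (u : Rn n → ℝ) (Ω : Set (Rn n)) : ℝ≥0∞ :=
  Kext n s u Ω + ENNReal.ofReal (ε ^ (-(2 * s)) / 2) * PotTerm n W u Ω

/-- Interaction functional `I_s(A,B)` between disjoint sets. -/
def Is (n : ℕ) (s : ℝ) (A B : Set (Rn n)) : ℝ≥0∞ :=
  ∫⁻ x in A, ∫⁻ y in B, ENNReal.ofReal (‖x - y‖ ^ (-((n : ℝ) + 2 * s)))

/-- Interior contribution of the fractional perimeter. -/
def PerSInt (n : ℕ) (s : ℝ) (E Ω : Set (Rn n)) : ℝ≥0∞ := Is n s (E ∩ Ω) (Ω \ E)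

/-- Exterior contribution of the fractional perimeter. -/
def PerSExt (n : ℕ) (s : ℝ) (E Ω : Set (Rn n)) : ℝ≥0∞ :=
  Is n s (E \ Ω) (Ω \ E) + Is n s (E ∩ Ω) (Ωᶜ \ E)

/-- Full fractional perimeter. -/
def PerS (n : ℕ) (s : ℝ) (E Ω : Set (Rn n)) : ℝ≥0∞ := PerSInt n s E Ω + PerSExt n s E Ω

/-- `u = χ_E − χ_{ℝⁿ∖E}` a.e. in `Ω`. -/
def phaseIn (n : ℕ) (u : Rn n → ℝ) (Ω E : Set (Rn n)) : Prop :=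
  ∀ᵐ x ∂(volume.restrict Ω), (x ∈ E → u x = 1) ∧ (x ∉ E → u x = -1)

/-- Γ-convergence, as `ε → 0⁺`, in the space `X` with the `L¹_loc` topology. -/
def GammaConvergesX (n : ℕ) (Fε : ℝ → (Rn n → ℝ) → ℝ≥0∞) (F : (Rn n → ℝ) → ℝ≥0∞) : Prop :=
  (∀ u : Rn n → ℝ, memX n u → ∀ uε : ℝ → Rn n → ℝ,
      (∀ ε ∈ Ioi (0:ℝ), memX n (uε ε)) → TendstoL1loc n uε u →
      F u ≤ liminf (fun ε => Fε ε (uε ε)) (𝓝[>] (0:ℝ))) ∧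
  (∀ u : Rn n → ℝ, memX n u → ∃ uε : ℝ → Rn n → ℝ,
      (∀ ε ∈ Ioi (0:ℝ), memX n (uε ε)) ∧ TendstoL1loc n uε u ∧
      limsup (fun ε => Fε ε (uε ε)) (𝓝[>] (0:ℝ)) ≤ F u)

/-- Divergence of a vector field on `ℝⁿ`. -/
def divg (n : ℕ) (φ : Rn n → Rn n) (x : Rn n) : ℝ :=
  ∑ i : Fin n, fderiv ℝ φ x (EuclideanSpace.single i (1:ℝ)) i

/-- Classical (distributional/De Giorgi) perimeter of `E` in the open set `Ω`:
the total variation of the distributional gradient of `χ_E` in `Ω`. -/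
def Per (n : ℕ) (E Ω : Set (Rn n)) : ℝ≥0∞ :=
  ⨆ (φ : Rn n → Rn n) (_ : ContDiff ℝ 1 φ) (_ : HasCompactSupport φ)
    (_ : tsupport φ ⊆ Ω) (_ : ∀ x, ‖φ x‖ ≤ 1),
    ENNReal.ofReal (∫ x in E, divg n φ x)

/-- `Ω` has Lipschitz boundary: near every boundary point, `Ω` is the subgraph
of a Lipschitz function in some direction. -/
def HasLipschitzBoundary (n : ℕ) (Ω : Set (Rn n)) : Prop :=
  ∀ x ∈ frontier Ω, ∃ r > (0:ℝ), ∃ v : Rn n, ‖v‖ = 1 ∧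
    ∃ (L : ℝ≥0) (f : Rn n → ℝ), LipschitzWith L f ∧
      Ω ∩ ball x r = {y ∈ ball x r | ⟪y, v⟫ < f (y - ⟪y, v⟫ • v)}

/-- The reduced boundary `∂*E` (identified, as usual up to an `H^{n-1}`-negligible set,
with the measure-theoretic boundary: points where the density of `E` is neither 0 nor 1). -/
def reducedBoundary (n : ℕ) (E : Set (Rn n)) : Set (Rn n) :=
  {x : Rn n |
    ¬ Tendsto (fun r : ℝ => volume (E ∩ ball x r) / volume (ball x r)) (𝓝[>] 0) (𝓝 0) ∧
    ¬ Tendsto (fun r : ℝ => volume (E ∩ ball x r) / volume (ball x r)) (𝓝[>] 0) (𝓝 1)}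

/-- `ω_m`: Lebesgue measure of the unit ball of `ℝ^m`. -/
def omegaBall (m : ℕ) : ℝ≥0∞ := volume (ball (0 : EuclideanSpace ℝ (Fin m)) 1)

/-- Dirichlet energy `∫_Ω |∇u|²`. -/
def Dirichlet (n : ℕ) (u : Rn n → ℝ) (Ω : Set (Rn n)) : ℝ≥0∞ :=
  ∫⁻ x in Ω, ENNReal.ofReal (‖gradient u x‖ ^ 2)

/-- Allen–Cahn energy `F₁(u,Ω) = ∫_Ω |∇u|² + ∫_Ω W(u)`. -/
def AC (n : ℕ) (W : ℝ → ℝ) (u : Rn n → ℝ) (Ω : Set (Rn n)) : ℝ≥0∞ :=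
  Dirichlet n u Ω + PotTerm n W u Ω

/-- Full nonlocal kernel `K(u,Ω) = K^int + K^ext`. -/
def Kfull (n : ℕ) (s : ℝ) (u : Rn n → ℝ) (Ω : Set (Rn n)) : ℝ≥0∞ :=
  Kint n s u Ω + Kext n s u Ω

/-- Fractional Allen–Cahn energy `F₁(u,Ω) = K(u,Ω) + ∫_Ω W(u)`. -/
def FracAC (n : ℕ) (s : ℝ) (W : ℝ → ℝ) (u : Rn n → ℝ) (Ω : Set (Rn n)) : ℝ≥0∞ :=
  Kfull n s u Ω + PotTerm n W u Ω

/-- `F^int_ε` for `s ∈ [1/2,1)` (with the logarithmic scaling at `s = 1/2`). -/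
def FintH (n : ℕ) (s : ℝ) (W : ℝ → ℝ) (ε : ℝ) (u : Rn n → ℝ) (Ω : Set (Rn n)) : ℝ≥0∞ :=
  if s = (1/2 : ℝ) then
    ENNReal.ofReal |Real.log ε|⁻¹ * Kint n s u Ω
      + ENNReal.ofReal (|ε * Real.log ε|⁻¹ / 2) * PotTerm n W u Ω
  else
    ENNReal.ofReal (ε ^ (2 * s - 1)) * Kint n s u Ω
      + ENNReal.ofReal (ε⁻¹ / 2) * PotTerm n W u Ω

/-- `F^ext_ε` for `s ∈ [1/2,1)`. -/
def FextH (n : ℕ) (s : ℝ) (W : ℝ → ℝ) (ε : ℝ) (u : Rn n → ℝ) (Ω : Set (Rn n)) : ℝ≥0∞ :=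
  if s = (1/2 : ℝ) then
    ENNReal.ofReal |Real.log ε|⁻¹ * Kext n s u Ω
      + ENNReal.ofReal (|ε * Real.log ε|⁻¹ / 2) * PotTerm n W u Ω
  else
    ENNReal.ofReal (ε ^ (2 * s - 1)) * Kext n s u Ω
      + ENNReal.ofReal (ε⁻¹ / 2) * PotTerm n W u Ω

/-- `F_ε = F^int_ε + F^ext_ε` for `s ∈ [1/2,1)`. -/
def FH (n : ℕ) (s : ℝ) (W : ℝ → ℝ) (ε : ℝ) (u : Rn n → ℝ) (Ω : Set (Rn n)) : ℝ≥0∞ :=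
  FintH n s W ε u Ω + FextH n s W ε u Ω


/-! Take `ε_k → 0⁺` realising the liminf `L < ∞`. The potential term is at most
`2 ε_k^{2s} F^int_{ε_k} → 0`, and a subsequence of `u_{ε_k}` converges a.e. in `Ω`, so by
Fatou `∫_Ω W(u) = 0`, i.e. `u = ±1` a.e. in `Ω`. Fatou on `Ω × Ω` gives `K^int(u,Ω) ≤ L`,
and `K^int(u,Ω) ≥ Per_s^int(E,Ω)` for `E = {u = 1}` since `|u(x) - u(y)|² = 4` when
`x ∈ E`, `y ∉ E`. -/

theorem exists_seq_forall_mem_tendsto_liminf {β : Type*} {l : Filter β} [l.NeBot]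
    [l.IsCountablyGenerated] {S : Set β} (hS : S ∈ l) (f : β → ℝ≥0∞) :
    ∃ x : ℕ → β, (∀ k, x k ∈ S) ∧ Tendsto x atTop l ∧
      Tendsto (f ∘ x) atTop (𝓝 (liminf f l)) := by
  obtain ⟨x, hfx, hx⟩ := exists_seq_tendsto_liminf (u := f) (f := l)
  obtain ⟨N, hN⟩ := eventually_atTop.1 (hx.eventually hS)
  exact ⟨fun k => x (k + N), fun k => hN _ le_add_self,
    (tendsto_add_atTop_iff_nat N).2 hx, (tendsto_add_atTop_iff_nat N).2 hfx⟩

theorem lintegral_le_liminf_of_ae_tendsto {α ι : Type*} [MeasurableSpace α] {μ : Measure α}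
    {l : Filter ι} [l.NeBot] [l.IsCountablyGenerated] {f : ι → α → ℝ≥0∞} {g : α → ℝ≥0∞}
    (hf : ∀ i, AEMeasurable (f i) μ) (hfg : ∀ᵐ a ∂μ, Tendsto (fun i => f i a) l (𝓝 (g a))) :
    ∫⁻ a, g a ∂μ ≤ liminf (fun i => ∫⁻ a, f i a ∂μ) l :=
  calc ∫⁻ a, g a ∂μ = ∫⁻ a, liminf (fun i => f i a) l ∂μ :=
        lintegral_congr_ae (hfg.mono fun _ ha => ha.liminf_eq.symm)
    _ ≤ _ := lintegral_liminf_le' hf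

namespace TendstoL1loc

variable {n : ℕ} {uε : ℝ → Rn n → ℝ} {u : Rn n → ℝ}

theorem tendsto_lintegral_of_isBounded (h : TendstoL1loc n uε u) {Ω : Set (Rn n)}
    (hΩ : Bornology.IsBounded Ω) :
    Tendsto (fun ε => ∫⁻ x in Ω, ENNReal.ofReal |uε ε x - u x|) (𝓝[>] 0) (𝓝 0) :=
  tendsto_of_tendsto_of_tendsto_of_le_of_le tendsto_const_nhds
    (h _ hΩ.isCompact_closure) (fun _ => zero_le)
    (fun _ => lintegral_mono_set subset_closure)

theorem exists_subseq_ae_tendsto (h : TendstoL1loc n uε u) {Ω : Set (Rn n)}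
    (hΩ : Bornology.IsBounded Ω) {x : ℕ → ℝ} (hx : Tendsto x atTop (𝓝[>] 0))
    (hux : ∀ k, AEStronglyMeasurable (uε (x k)) (volume.restrict Ω))
    (hu : AEStronglyMeasurable u (volume.restrict Ω)) :
    ∃ ns : ℕ → ℕ, StrictMono ns ∧ ∀ᵐ y ∂volume.restrict Ω,
      Tendsto (fun k => uε (x (ns k)) y) atTop (𝓝 (u y)) := by
  have hL1 : Tendsto (fun k => eLpNorm (uε (x k) - u) 1 (volume.restrict Ω)) atTop (𝓝 0) := by
    refine ((h.tendsto_lintegral_of_isBounded hΩ).comp hx).congr fun k => ?_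
    simp only [Function.comp_apply, eLpNorm_one_eq_lintegral_enorm, Pi.sub_apply,
      Real.enorm_eq_ofReal_abs]
  exact (tendstoInMeasure_of_tendsto_eLpNorm one_ne_zero hux hu hL1).exists_seq_tendsto_ae

end TendstoL1loc

section Energy

variable {n : ℕ} {s : ℝ} {W : ℝ → ℝ} {Ω : Set (Rn n)} {u : Rn n → ℝ}

theorem PotTerm_le_mul_Fint {ε : ℝ} (hε : 0 < ε) (v : Rn n → ℝ) :
    PotTerm n W v Ω ≤ ENNReal.ofReal (2 * ε ^ (2 * s)) * Fint n s W ε v Ω := by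
  have hinv : ENNReal.ofReal (2 * ε ^ (2 * s)) * ENNReal.ofReal (ε ^ (-(2 * s)) / 2) = 1 := by
    rw [← ENNReal.ofReal_mul (by positivity), Real.rpow_neg hε.le, ENNReal.ofReal_eq_one]
    field_simp [(Real.rpow_pos_of_pos hε (2 * s)).ne']
  calc PotTerm n W v Ω
      = ENNReal.ofReal (2 * ε ^ (2 * s)) *
          (ENNReal.ofReal (ε ^ (-(2 * s)) / 2) * PotTerm n W v Ω) := by
        rw [← mul_assoc, hinv, one_mul]
    _ ≤ ENNReal.ofReal (2 * ε ^ (2 * s)) * Fint n s W ε v Ω := by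
        gcongr
        exact le_add_self

theorem tendsto_PotTerm_zero_of_tendsto_Fint (hs : 0 < s) {x : ℕ → ℝ}
    (hx : Tendsto x atTop (𝓝[>] 0)) (hx0 : ∀ k, 0 < x k) {v : ℕ → Rn n → ℝ} {L : ℝ≥0∞}
    (hL : L ≠ ⊤) (hF : Tendsto (fun k => Fint n s W (x k) (v k) Ω) atTop (𝓝 L)) :
    Tendsto (fun k => PotTerm n W (v k) Ω) atTop (𝓝 0) := by
  have hpow : Tendsto (fun k => ENNReal.ofReal (2 * x k ^ (2 * s))) atTop (𝓝 0) := by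
    have h := ((Real.continuousAt_rpow_const 0 (2 * s) (Or.inr (by positivity))).tendsto.comp
      (tendsto_nhds_of_tendsto_nhdsWithin hx)).const_mul 2
    simpa [Function.comp_def, Real.zero_rpow (by positivity : 2 * s ≠ 0)] using
      ENNReal.tendsto_ofReal h
  have hbound := ENNReal.Tendsto.mul hpow (Or.inr hL) hF (Or.inr ENNReal.zero_ne_top)
  rw [zero_mul] at hbound
  exact tendsto_of_tendsto_of_tendsto_of_le_of_le tendsto_const_nhds hbound
    (fun _ => zero_le) (fun k => PotTerm_le_mul_Fint (hx0 k) (v k))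

theorem DoubleWell.ae_eq_one_or_neg_one_of_PotTerm_eq_zero (hW : DoubleWell W)
    (hu : Measurable u) (h : PotTerm n W u Ω = 0) :
    ∀ᵐ x ∂volume.restrict Ω, u x = 1 ∨ u x = -1 := by
  have hW0 := (lintegral_eq_zero_iff (hW.1.continuous.measurable.comp hu).ennreal_ofReal).1 h
  filter_upwards [hW0] with x hx
  by_contra! hne
  exact (ENNReal.ofReal_pos.2 (hW.2.2.2.2.1 _ hne.1 hne.2)).ne' hx

theorem PotTerm_le_liminf_of_ae_tendsto (hW : Continuous W) {v : ℕ → Rn n → ℝ}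
    (hv : ∀ k, Measurable (v k))
    (hvu : ∀ᵐ x ∂volume.restrict Ω, Tendsto (fun k => v k x) atTop (𝓝 (u x))) :
    PotTerm n W u Ω ≤ liminf (fun k => PotTerm n W (v k) Ω) atTop :=
  lintegral_le_liminf_of_ae_tendsto
    (fun k => (hW.measurable.comp (hv k)).ennreal_ofReal.aemeasurable)
    (hvu.mono fun _ hx => ENNReal.tendsto_ofReal ((hW.tendsto _).comp hx))

theorem measurable_Kint_integrand {v : Rn n → ℝ} (hv : Measurable v) :
    Measurable (fun p : Rn n × Rn n =>
      ENNReal.ofReal (|v p.1 - v p.2| ^ 2 / ‖p.1 - p.2‖ ^ ((n : ℝ) + 2 * s))) :=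
  (((hv.comp measurable_fst).sub (hv.comp measurable_snd)).abs.pow_const 2).div
    ((measurable_fst.sub measurable_snd).norm.pow_const _) |>.ennreal_ofReal

theorem Kint_eq_lintegral_prod {v : Rn n → ℝ} (hv : Measurable v) :
    Kint n s v Ω = ∫⁻ p, ENNReal.ofReal (|v p.1 - v p.2| ^ 2 / ‖p.1 - p.2‖ ^ ((n : ℝ) + 2 * s))
      ∂(volume.restrict Ω).prod (volume.restrict Ω) :=
  (lintegral_prod _ (measurable_Kint_integrand hv).aemeasurable).symm

theorem Kint_le_liminf_of_ae_tendsto (hu : Measurable u) {v : ℕ → Rn n → ℝ}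
    (hv : ∀ k, Measurable (v k))
    (hvu : ∀ᵐ x ∂volume.restrict Ω, Tendsto (fun k => v k x) atTop (𝓝 (u x))) :
    Kint n s u Ω ≤ liminf (fun k => Kint n s (v k) Ω) atTop := by
  have hprod : ∀ᵐ p ∂(volume.restrict Ω).prod (volume.restrict Ω),
      Tendsto (fun k => v k p.1) atTop (𝓝 (u p.1)) ∧
        Tendsto (fun k => v k p.2) atTop (𝓝 (u p.2)) :=
    (Measure.quasiMeasurePreserving_fst.ae hvu).and (Measure.quasiMeasurePreserving_snd.ae hvu)
  simp only [Kint_eq_lintegral_prod hu, Kint_eq_lintegral_prod (hv _)]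
  exact lintegral_le_liminf_of_ae_tendsto
    (fun k => (measurable_Kint_integrand (hv k)).aemeasurable)
    (hprod.mono fun p hp => ENNReal.tendsto_ofReal (((hp.1.sub hp.2).abs.pow 2).div_const _))

theorem PerSInt_le_Kint {E : Set (Rn n)} (hΩ : MeasurableSet Ω)
    (hE : MeasurableSet E) (hu : phaseIn n u Ω E) : PerSInt n s E Ω ≤ Kint n s u Ω := by
  have hout : ∀ᵐ y ∂volume.restrict (Ω \ E), u y = -1 := by
    filter_upwards [ae_restrict_of_ae_restrict_of_subset sdiff_subset hu,
      ae_restrict_mem (hΩ.diff hE)] with y hy hyE using hy.2 hyE.2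
  have hin : ∀ᵐ x ∂volume.restrict (E ∩ Ω), u x = 1 := by
    filter_upwards [ae_restrict_of_ae_restrict_of_subset inter_subset_right hu,
      ae_restrict_mem (hE.inter hΩ)] with x hx hxE using hx.1 hxE.1
  calc PerSInt n s E Ω
      ≤ ∫⁻ x in E ∩ Ω, ∫⁻ y in Ω \ E,
          ENNReal.ofReal (|u x - u y| ^ 2 / ‖x - y‖ ^ ((n : ℝ) + 2 * s)) := by
        refine lintegral_mono_ae (hin.mono fun x hx => lintegral_mono_ae ?_)
        filter_upwards [hout] with y hy
        rw [hx, hy, Real.rpow_neg (norm_nonneg _), div_eq_mul_inv]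
        refine ENNReal.ofReal_le_ofReal (le_mul_of_one_le_left (by positivity) ?_)
        norm_num
    _ ≤ Kint n s u Ω :=
        lintegral_mono' (Measure.restrict_mono inter_subset_right le_rfl) fun _ =>
          lintegral_mono' (Measure.restrict_mono sdiff_subset le_rfl) le_rfl

theorem phaseIn_preimage_one (hu : ∀ᵐ x ∂volume.restrict Ω, u x = 1 ∨ u x = -1) :
    phaseIn n u Ω (u ⁻¹' {1}) :=
  hu.mono fun _ hx => ⟨id, hx.resolve_left⟩

end Energy

theorem liminf_Fint_ge_perSInt_general
    (n : ℕ) (s : ℝ) (hs : s ∈ Set.Ioo (0:ℝ) (1/2))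
    (Ω : Set (Rn n)) (hΩo : IsOpen Ω)
    (hΩb : Bornology.IsBounded Ω)
    (W : ℝ → ℝ) (hW : DoubleWell W)
    (u : Rn n → ℝ) (hu : memX n u)
    (uε : ℝ → Rn n → ℝ) (huε : ∀ ε ∈ Set.Ioi (0:ℝ), memX n (uε ε))
    (hconv : TendstoL1loc n uε u)
    (hfin : liminf (fun ε => Fint n s W ε (uε ε) Ω) (𝓝[>] (0:ℝ)) < ⊤) :
    ∃ E : Set (Rn n), MeasurableSet E ∧ phaseIn n u Ω E ∧
      PerSInt n s E Ω ≤ liminf (fun ε => Fint n s W ε (uε ε) Ω) (𝓝[>] (0:ℝ)) := by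
  set F : ℝ → ℝ≥0∞ := fun ε => Fint n s W ε (uε ε) Ω
  obtain ⟨e, he0, he, hFe⟩ :=
    exists_seq_forall_mem_tendsto_liminf (self_mem_nhdsWithin (a := (0:ℝ)) (s := Ioi 0)) F
  have hmeas : ∀ k, Measurable (uε (e k)) := fun k => (huε _ (he0 k)).1
  obtain ⟨ns, hns, hae⟩ := hconv.exists_subseq_ae_tendsto hΩb he
    (fun k => (hmeas k).aestronglyMeasurable) hu.1.aestronglyMeasurable
  have hFsub : Tendsto (fun k => F (e (ns k))) atTop (𝓝 (liminf F (𝓝[>] 0))) :=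
    hFe.comp hns.tendsto_atTop
  have hpot := tendsto_PotTerm_zero_of_tendsto_Fint hs.1 (he.comp hns.tendsto_atTop)
    (fun k => he0 (ns k)) hfin.ne hFsub
  have hval : ∀ᵐ x ∂volume.restrict Ω, u x = 1 ∨ u x = -1 := by
    refine hW.ae_eq_one_or_neg_one_of_PotTerm_eq_zero hu.1 (le_antisymm ?_ zero_le)
    simpa only [hpot.liminf_eq] using
      PotTerm_le_liminf_of_ae_tendsto hW.1.continuous (fun k => hmeas (ns k)) hae
  have hE : MeasurableSet (u ⁻¹' {1}) := hu.1 (measurableSet_singleton 1)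
  refine ⟨u ⁻¹' {1}, hE, phaseIn_preimage_one hval, ?_⟩
  calc PerSInt n s (u ⁻¹' {1}) Ω
      ≤ Kint n s u Ω := PerSInt_le_Kint hΩo.measurableSet hE (phaseIn_preimage_one hval)
    _ ≤ liminf (fun k => Kint n s (uε (e (ns k))) Ω) atTop :=
        Kint_le_liminf_of_ae_tendsto hu.1 (fun k => hmeas (ns k)) hae
    _ ≤ liminf (fun k => F (e (ns k))) atTop :=
        liminf_le_liminf (Eventually.of_forall fun _ => le_self_add)
    _ = liminf F (𝓝[>] 0) := hFsub.liminf_eq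

/-- For `s ∈ (0,1/2)`, a bounded domain `Ω`, a double-well potential `W`:
if `u_ε ∈ X` converges to `u` in `L¹_loc(ℝⁿ)` as `ε → 0⁺` and
`liminf_{ε→0⁺} F^int_ε(u_ε,Ω) < +∞`, then `u ∈ {−1,1}` a.e. in `Ω`, i.e.
`u = χ_E − χ_{ℝⁿ∖E}` a.e. in `Ω` for some measurable `E`, and moreover
`liminf_{ε→0⁺} F^int_ε(u_ε,Ω) ≥ Per_s^int(E,Ω)`. -/
theorem liminf_Fint_ge_perSInt
    (n : ℕ) (hn : 1 ≤ n) (s : ℝ) (hs : s ∈ Set.Ioo (0:ℝ) (1/2))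
    (Ω : Set (Rn n)) (hΩo : IsOpen Ω) (hΩconn : IsConnected Ω)
    (hΩb : Bornology.IsBounded Ω)
    (W : ℝ → ℝ) (hW : DoubleWell W)
    (u : Rn n → ℝ) (hu : memX n u)
    (uε : ℝ → Rn n → ℝ) (huε : ∀ ε ∈ Set.Ioi (0:ℝ), memX n (uε ε))
    (hconv : TendstoL1loc n uε u)
    (hfin : liminf (fun ε => Fint n s W ε (uε ε) Ω) (𝓝[>] (0:ℝ)) < ⊤) :
    ∃ E : Set (Rn n), MeasurableSet E ∧ phaseIn n u Ω E ∧
      PerSInt n s E Ω ≤ liminf (fun ε => Fint n s W ε (uε ε) Ω) (𝓝[>] (0:ℝ)) :=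
  liminf_Fint_ge_perSInt_general n s hs Ω hΩo hΩb W hW u hu uε huε hconv hfin

end
end

section
/- Let n ≥ 1, s ∈ [1/2,1), Ω ⊂ ℝⁿ a bounded domain with Lipschitz boundary, and W a double-well potential. For every u ∈ X such that u = χ_E − χ_{ℝⁿ∖E} a.e. in Ω for some set E of finite perimeter in Ω, there exists a family u_ε converging to u in L¹_loc(ℝⁿ) such that lim_{ε→0⁺} F^ext_ε(u_ε,Ω) = 0; in other words, the exterior nonlocal interactions disappear in the Γ-limit in the weakly nonlocal regime s ∈ [1/2,1). -/
open MeasureTheory Filter Topology Metric Set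
open scoped ENNReal NNReal RealInnerProductSpace

noncomputable section

/-! Overwrite `u` by the well `1` on the `δ`-neighbourhood of `∂Ω` (after truncating it to
`[-1, 1]`). Inside `Ω` the new profile still takes only the values `±1`, so the potential term
vanishes. A point of `Ω` and a point of its complement either both lie in the collar, where the
profile is constant, or are at distance at least `δ`, so `K^ext ≲ δ^{-(n+2s)} |Ω|`. Since
`s ≥ 1/2`, the prefactor `c_ε` of `K^ext` tends to `0`, and `δ = c_ε^{1/(2(n+2s))}` gives
`F^ext_ε ≲ √c_ε → 0`. A Lipschitz boundary is Lebesgue-null, so the collars shrink to a null set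
and the profiles converge in `L¹_loc`. -/

theorem IsPreconnected.inter_frontier_nonempty {X : Type*} [TopologicalSpace X] {S s : Set X}
    (hS : IsPreconnected S) (hSs : (S ∩ s).Nonempty) (hSs' : (S \ s).Nonempty) :
    (S ∩ frontier s).Nonempty := by
  by_contra h
  have hcover : S ⊆ interior s ∪ (closure s)ᶜ := fun x hx => by
    by_cases hc : x ∈ closure s
    · exact Or.inl (by_contra fun hi => h ⟨x, hx, hc, hi⟩)
    · exact Or.inr hc
  have hdisj : Disjoint (interior s) (closure s)ᶜ :=
    disjoint_compl_right_iff_subset.2 (interior_subset.trans subset_closure)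
  obtain ⟨x, hxS, hxs⟩ := hSs
  have hx : x ∈ interior s :=
    (hcover hxS).resolve_right fun hxc => hxc (subset_closure hxs)
  obtain ⟨y, hyS, hys⟩ := hSs'
  exact hys (interior_subset (hS.subset_left_of_subset_union isOpen_interior
    isClosed_closure.isOpen_compl hdisj hcover ⟨x, hxS, hx⟩ hyS))

theorem exists_mem_frontier_dist_le {E : Type*} [NormedAddCommGroup E] [NormedSpace ℝ E]
    {s : Set E} {x y : E} (hx : x ∈ s) (hy : y ∉ s) :
    ∃ z ∈ frontier s, dist x z ≤ dist x y ∧ dist y z ≤ dist x y := by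
  obtain ⟨z, hz, hzs⟩ := (convex_segment x y).isPreconnected.inter_frontier_nonempty
    ⟨x, left_mem_segment ℝ x y, hx⟩ ⟨y, right_mem_segment ℝ x y, hy⟩
  have hsum := dist_add_dist_of_mem_segment hz
  refine ⟨z, hzs, ?_, ?_⟩ <;> linarith [dist_nonneg (x := x) (y := z), dist_comm y z,
    dist_nonneg (x := z) (y := y)]

theorem le_dist_of_notMem_thickening_frontier {E : Type*} [NormedAddCommGroup E]
    [NormedSpace ℝ E] {s : Set E} {x y : E} {δ : ℝ} (hx : x ∈ s) (hy : y ∉ s)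
    (hxy : x ∉ thickening δ (frontier s) ∨ y ∉ thickening δ (frontier s)) :
    δ ≤ dist x y := by
  obtain ⟨z, hz, hxz, hyz⟩ := exists_mem_frontier_dist_le hx hy
  rcases hxy with h | h <;> rw [mem_thickening_iff] at h <;> push Not at h
  · exact (h z hz).trans hxz
  · exact (h z hz).trans hyz

theorem measure_setOf_eq_eq_zero_of_add_smul {E : Type*} [AddCommGroup E]
    [Module ℝ E] [MeasurableSpace E] [MeasurableAdd E] (μ : Measure E) [SFinite μ]
    [μ.IsAddRightInvariant] {g : E → ℝ} (hg : Measurable g) {v : E}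
    (hgv : ∀ y (t : ℝ), g (y + t • v) = g y + t) (c : ℝ) :
    μ {y | g y = c} = 0 := by
  have hlevel : ∀ t, μ {y | g y = t} = μ {y | g y = c} := fun t => by
    rw [← measure_preimage_add_right μ ((c - t) • v) {y | g y = c}]
    congr 1
    ext y
    simp only [mem_preimage, mem_ofPred_eq, hgv]
    constructor <;> intro h <;> linarith
  by_contra h
  have hall : {t : ℝ | 0 < μ {y | g y = t}} = univ :=
    eq_univ_of_forall fun t => show 0 < μ {y | g y = t} by rw [hlevel]; exact pos_iff_ne_zero.2 h
  exact not_countable_univ (hall ▸ Measure.countable_meas_level_set_pos hg)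

/-- The level sets of `y ↦ ⟪y, v⟫ - f (y - ⟪y, v⟫ • v)` are translates of each other along `v`,
and only countably many of them can have positive measure. -/
theorem measure_graph_eq_zero {E : Type*} [NormedAddCommGroup E] [InnerProductSpace ℝ E]
    [MeasurableSpace E] [BorelSpace E] [SecondCountableTopology E] (μ : Measure E) [SFinite μ]
    [μ.IsAddRightInvariant] {v : E} (hv : ‖v‖ = 1) {f : E → ℝ} (hf : Continuous f) :
    μ {y | ⟪y, v⟫ = f (y - ⟪y, v⟫ • v)} = 0 := by
  have hvv : ⟪v, v⟫ = (1 : ℝ) := by rw [real_inner_self_eq_norm_sq, hv, one_pow]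
  have hg : Measurable fun y : E => ⟪y, v⟫ - f (y - ⟪y, v⟫ • v) := by fun_prop
  have hshift : ∀ (y : E) (t : ℝ), ⟪y + t • v, v⟫ - f (y + t • v - ⟪y + t • v, v⟫ • v)
      = ⟪y, v⟫ - f (y - ⟪y, v⟫ • v) + t := fun y t => by
    have hinner : ⟪y + t • v, v⟫ = ⟪y, v⟫ + t := by
      rw [inner_add_left, real_inner_smul_left, hvv, mul_one]
    rw [hinner, add_smul, add_sub_add_right_eq_sub]
    ring
  simpa only [sub_eq_zero] using measure_setOf_eq_eq_zero_of_add_smul μ hg hshift 0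

theorem HasLipschitzBoundary.volume_frontier_eq_zero {n : ℕ} {Ω : Set (Rn n)}
    (hΩ : HasLipschitzBoundary n Ω) : volume (frontier Ω) = 0 := by
  refine measure_null_of_locally_null _ fun x hx => ?_
  obtain ⟨r, hr, v, hv, L, f, hf, hΩx⟩ := hΩ x hx
  have hinner : Continuous fun y : Rn n => ⟪y, v⟫ := by fun_prop
  have hgraph : Continuous fun y : Rn n => f (y - ⟪y, v⟫ • v) :=
    hf.continuous.comp (by fun_prop)
  refine ⟨frontier Ω ∩ ball x r, inter_mem_nhdsWithin _ (ball_mem_nhds x hr),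
    measure_mono_null ?_ (measure_graph_eq_zero volume hv hf.continuous)⟩
  calc frontier Ω ∩ ball x r = frontier (Ω ∩ ball x r) ∩ ball x r :=
        (frontier_inter_open_inter isOpen_ball).symm
    _ = frontier ({y | ⟪y, v⟫ < f (y - ⟪y, v⟫ • v)} ∩ ball x r) ∩ ball x r := by
        rw [hΩx]
        congr 2
        ext y
        exact and_comm
    _ ⊆ frontier {y | ⟪y, v⟫ < f (y - ⟪y, v⟫ • v)} := by
        rw [frontier_inter_open_inter isOpen_ball]
        exact inter_subset_left
    _ ⊆ _ := frontier_lt_subset_eq hinner hgraph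

theorem tendsto_rpow_nhdsGT_zero {q : ℝ} (hq : 0 < q) :
    Tendsto (fun t : ℝ => t ^ q) (𝓝[>] 0) (𝓝[>] 0) := by
  refine tendsto_nhdsWithin_iff.2 ⟨?_, eventually_mem_nhdsWithin.mono fun t ht =>
    Real.rpow_pos_of_pos ht q⟩
  simpa [Real.zero_rpow hq.ne'] using
    (Real.continuousAt_rpow_const 0 q (Or.inr hq.le)).tendsto.mono_left nhdsWithin_le_nhds

theorem sq_div_rpow_le_of_le_dist {a δ r p : ℝ} (ha : |a| ≤ 2) (hδ : 0 < δ) (hδ1 : δ ≤ 1)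
    (hδr : δ ≤ r) (hp : 0 ≤ p) :
    a ^ 2 / r ^ p ≤ 4 * (2 / δ) ^ p * (1 + r) ^ (-p) := by
  have hr : 0 < r := hδ.trans_le hδr
  have ha2 : a ^ 2 ≤ 4 := by nlinarith [sq_abs a, abs_nonneg a]
  have hgrow : 1 + r ≤ 2 / δ * r := by
    rw [div_mul_eq_mul_div, le_div_iff₀ hδ]
    nlinarith
  have hgrow_p : (1 + r) ^ p ≤ (2 / δ) ^ p * r ^ p := by
    rw [← Real.mul_rpow (by positivity) hr.le]
    exact Real.rpow_le_rpow (by positivity) hgrow hp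
  rw [Real.rpow_neg (by positivity), ← div_eq_mul_inv,
    div_le_div_iff₀ (by positivity) (by positivity)]
  calc a ^ 2 * (1 + r) ^ p ≤ 4 * ((2 / δ) ^ p * r ^ p) :=
        mul_le_mul ha2 hgrow_p (by positivity) (by norm_num)
    _ = 4 * (2 / δ) ^ p * r ^ p := by ring

section CollarExtension

variable {X : Type*} [PseudoMetricSpace X]

open Classical in
def collarExtension (Ω : Set X) (u : X → ℝ) (δ : ℝ) (x : X) : ℝ :=
  if x ∈ thickening δ (frontier Ω) then 1 else max (-1) (min 1 (u x))

variable {Ω : Set X} {u : X → ℝ} {δ : ℝ} {x : X}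

theorem abs_collarExtension_le_one : |collarExtension Ω u δ x| ≤ 1 := by
  unfold collarExtension
  split_ifs
  · norm_num
  · exact abs_le.2 ⟨le_max_left _ _, max_le (by norm_num) (min_le_left _ _)⟩

theorem collarExtension_of_mem (hx : x ∈ thickening δ (frontier Ω)) :
    collarExtension Ω u δ x = 1 := if_pos hx

theorem collarExtension_of_notMem (hx : x ∉ thickening δ (frontier Ω)) (hu : |u x| ≤ 1) :
    collarExtension Ω u δ x = u x := by
  rw [collarExtension, if_neg hx, min_eq_right (abs_le.1 hu).2, max_eq_right (abs_le.1 hu).1]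

theorem collarExtension_eq_one_or_eq_neg_one (hu : u x = 1 ∨ u x = -1) :
    collarExtension Ω u δ x = 1 ∨ collarExtension Ω u δ x = -1 := by
  by_cases hx : x ∈ thickening δ (frontier Ω)
  · exact Or.inl (collarExtension_of_mem hx)
  · rw [collarExtension_of_notMem hx (by rcases hu with h | h <;> simp [h])]
    exact hu

variable [MeasurableSpace X] [OpensMeasurableSpace X]

theorem measurable_collarExtension (hu : Measurable u) : Measurable (collarExtension Ω u δ) :=
  Measurable.ite isOpen_thickening.measurableSet measurable_const
    (measurable_const.max (measurable_const.min hu))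

theorem lintegral_abs_collarExtension_sub_le {μ : Measure X} (hu : ∀ᵐ x ∂μ, |u x| ≤ 1) :
    ∫⁻ x, ENNReal.ofReal |collarExtension Ω u δ x - u x| ∂μ
      ≤ 2 * μ (thickening δ (frontier Ω)) := by
  rw [← lintegral_indicator_const isOpen_thickening.measurableSet]
  refine lintegral_mono_ae (hu.mono fun x hux => ?_)
  by_cases hx : x ∈ thickening δ (frontier Ω)
  · rw [indicator_of_mem hx, ← ENNReal.ofReal_ofNat]
    refine ENNReal.ofReal_le_ofReal ((abs_sub _ _).trans ?_)
    linarith [abs_collarExtension_le_one (Ω := Ω) (u := u) (δ := δ) (x := x)]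
  · simp [collarExtension_of_notMem hx hux]

end CollarExtension

theorem memX_collarExtension {n : ℕ} {u : Rn n → ℝ} (hu : memX n u) (Ω : Set (Rn n)) (δ : ℝ) :
    memX n (collarExtension Ω u δ) :=
  ⟨measurable_collarExtension hu.1, ae_of_all _ fun _ => abs_collarExtension_le_one⟩

theorem tendstoL1loc_collarExtension {n : ℕ} {Ω : Set (Rn n)} {u : Rn n → ℝ} {δ : ℝ → ℝ}
    (hδ : Tendsto δ (𝓝[>] 0) (𝓝[>] 0)) (hΩb : Bornology.IsBounded Ω)
    (hΩ : HasLipschitzBoundary n Ω) (hu : memX n u) :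
    TendstoL1loc n (fun ε => collarExtension Ω u (δ ε)) u := by
  have hthick : Tendsto (fun r => volume (thickening r (frontier Ω))) (𝓝[>] 0) (𝓝 0) := by
    have hfin : volume (thickening 1 (frontier Ω)) ≠ ⊤ :=
      (hΩb.closure.subset frontier_subset_closure).thickening.measure_lt_top.ne
    simpa [hΩ.volume_frontier_eq_zero] using
      tendsto_measure_thickening_of_isClosed ⟨1, one_pos, hfin⟩ isClosed_frontier
  intro K _
  have hbound : Tendsto (fun ε => 2 * volume (thickening (δ ε) (frontier Ω))) (𝓝[>] 0) (𝓝 0) := by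
    simpa using ENNReal.Tendsto.const_mul (hthick.comp hδ) (Or.inr (ENNReal.ofNat_ne_top (n := 2)))
  exact tendsto_of_tendsto_of_tendsto_of_le_of_le tendsto_const_nhds hbound (fun _ => zero_le)
    fun ε => (setLIntegral_le_lintegral _ _).trans (lintegral_abs_collarExtension_sub_le hu.2)

theorem potTerm_collarExtension {n : ℕ} {W : ℝ → ℝ} {u : Rn n → ℝ} {Ω E : Set (Rn n)}
    (hW1 : W 1 = 0) (hWm1 : W (-1) = 0) (hphase : phaseIn n u Ω E) (δ : ℝ) :
    PotTerm n W (collarExtension Ω u δ) Ω = 0 := by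
  refine (lintegral_congr_ae (hphase.mono fun x hx => ?_)).trans lintegral_zero
  have hux : u x = 1 ∨ u x = -1 := by
    by_cases hxE : x ∈ E
    · exact Or.inl (hx.1 hxE)
    · exact Or.inr (hx.2 hxE)
  rcases collarExtension_eq_one_or_eq_neg_one (Ω := Ω) (δ := δ) hux with h | h <;>
    simp [h, hW1, hWm1]

theorem Kext_collarExtension_le {n : ℕ} {s δ : ℝ} (hs : 0 ≤ s) (hδ : 0 < δ) (hδ1 : δ ≤ 1)
    (Ω : Set (Rn n)) (u : Rn n → ℝ) :
    Kext n s (collarExtension Ω u δ) Ω ≤ 2 * ENNReal.ofReal (4 * (2 / δ) ^ ((n : ℝ) + 2 * s))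
      * ((∫⁻ z : Rn n, ENNReal.ofReal ((1 + ‖z‖) ^ (-((n : ℝ) + 2 * s)))) * volume Ω) := by
  set p : ℝ := (n : ℝ) + 2 * s
  set w := collarExtension Ω u δ
  set C := ENNReal.ofReal (4 * (2 / δ) ^ p)
  have hpointwise : ∀ x ∈ Ω, ∀ y ∈ Ωᶜ, ENNReal.ofReal (|w x - w y| ^ 2 / ‖x - y‖ ^ p)
      ≤ C * ENNReal.ofReal ((1 + ‖x - y‖) ^ (-p)) := fun x hx y hy => by
    rw [← ENNReal.ofReal_mul (by positivity)]
    refine ENNReal.ofReal_le_ofReal ?_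
    by_cases hcollar : x ∈ thickening δ (frontier Ω) ∧ y ∈ thickening δ (frontier Ω)
    · simp only [w, collarExtension_of_mem hcollar.1, collarExtension_of_mem hcollar.2]
      norm_num
      positivity
    · have hxy := le_dist_of_notMem_thickening_frontier hx hy (not_and_or.1 hcollar)
      rw [dist_eq_norm] at hxy
      rw [sq_abs]
      refine sq_div_rpow_le_of_le_dist ?_ hδ hδ1 hxy (by positivity)
      linarith [abs_sub (w x) (w y), abs_collarExtension_le_one (Ω := Ω) (u := u) (δ := δ) (x := x),
        abs_collarExtension_le_one (Ω := Ω) (u := u) (δ := δ) (x := y)]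
  have hinner : ∀ x ∈ Ω, ∫⁻ y in Ωᶜ, ENNReal.ofReal (|w x - w y| ^ 2 / ‖x - y‖ ^ p)
      ≤ C * ∫⁻ z : Rn n, ENNReal.ofReal ((1 + ‖z‖) ^ (-p)) := fun x hx =>
    calc _ ≤ ∫⁻ y in Ωᶜ, C * ENNReal.ofReal ((1 + ‖x - y‖) ^ (-p)) :=
          setLIntegral_mono (by fun_prop) (hpointwise x hx)
      _ ≤ ∫⁻ y, C * ENNReal.ofReal ((1 + ‖x - y‖) ^ (-p)) := setLIntegral_le_lintegral _ _
      _ = C * ∫⁻ z : Rn n, ENNReal.ofReal ((1 + ‖z‖) ^ (-p)) := by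
          rw [lintegral_const_mul _ (by fun_prop),
            lintegral_sub_left_eq_self (fun z => ENNReal.ofReal ((1 + ‖z‖) ^ (-p))) x]
  calc Kext n s w Ω ≤ 2 * ∫⁻ _ in Ω, C * ∫⁻ z : Rn n, ENNReal.ofReal ((1 + ‖z‖) ^ (-p)) :=
        mul_le_mul_right (setLIntegral_mono measurable_const hinner) 2
    _ = _ := by rw [setLIntegral_const, mul_assoc, mul_assoc]

def extScale (s ε : ℝ) : ℝ := if s = 1 / 2 then |Real.log ε|⁻¹ else ε ^ (2 * s - 1)

theorem FextH_eq_extScale_mul {n : ℕ} {s ε : ℝ} {W : ℝ → ℝ} {u : Rn n → ℝ} {Ω : Set (Rn n)}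
    (hpot : PotTerm n W u Ω = 0) :
    FextH n s W ε u Ω = ENNReal.ofReal (extScale s ε) * Kext n s u Ω := by
  unfold FextH extScale
  split_ifs <;> simp [hpot]

theorem tendsto_extScale {s : ℝ} (hs : 1 / 2 ≤ s) :
    Tendsto (extScale s) (𝓝[>] 0) (𝓝[>] 0) := by
  unfold extScale
  split_ifs with h
  · exact tendsto_inv_atTop_nhdsGT_zero.comp
      (tendsto_abs_atBot_atTop.comp Real.tendsto_log_nhdsGT_zero)
  · exact tendsto_rpow_nhdsGT_zero (by contrapose! h; linarith)

theorem tendsto_FextH_collarExtension {n : ℕ} {s : ℝ} (hs : 1 / 2 ≤ s) {Ω E : Set (Rn n)}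
    (hΩb : Bornology.IsBounded Ω) {W : ℝ → ℝ} (hW1 : W 1 = 0) (hWm1 : W (-1) = 0)
    {u : Rn n → ℝ} (hphase : phaseIn n u Ω E) :
    Tendsto (fun ε => FextH n s W ε
        (collarExtension Ω u (extScale s ε ^ (1 / (2 * ((n : ℝ) + 2 * s))))) Ω)
      (𝓝[>] 0) (𝓝 0) := by
  set p : ℝ := (n : ℝ) + 2 * s
  have hp : 0 < p := by positivity
  set c := extScale s
  set M := (∫⁻ z : Rn n, ENNReal.ofReal ((1 + ‖z‖) ^ (-p))) * volume Ω
  have hM : M ≠ ⊤ := ENNReal.mul_ne_top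
    (finite_integral_one_add_norm (by simp [p]; linarith)).ne hΩb.measure_lt_top.ne
  have hc := tendsto_extScale hs
  -- `δ = c ^ (1 / (2 p))` makes the cost `c δ⁻ᵖ` of the collar equal to `√c`.
  have hrescale : ∀ t : ℝ, 0 < t →
      t * (4 * (2 / t ^ (1 / (2 * p))) ^ p) = 4 * 2 ^ p * √t := fun t ht => by
    rw [Real.div_rpow zero_le_two (by positivity), ← Real.rpow_mul ht.le,
      show 1 / (2 * p) * p = 1 / 2 by field_simp, ← Real.sqrt_eq_rpow]
    calc t * (4 * (2 ^ p / √t)) = 4 * 2 ^ p * (t / √t) := by ring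
      _ = 4 * 2 ^ p * √t := by rw [Real.div_sqrt]
  have hbound : ∀ᶠ ε in 𝓝[>] 0, FextH n s W ε (collarExtension Ω u (c ε ^ (1 / (2 * p)))) Ω
      ≤ 2 * ENNReal.ofReal (4 * 2 ^ p * √(c ε)) * M := by
    filter_upwards [hc (Ioc_mem_nhdsGT one_pos)] with ε ⟨hc0, hc1⟩
    rw [FextH_eq_extScale_mul (potTerm_collarExtension hW1 hWm1 hphase _)]
    calc _ ≤ ENNReal.ofReal (c ε) * (2 * ENNReal.ofReal (4 * (2 / c ε ^ (1 / (2 * p))) ^ p) * M) :=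
          mul_le_mul_right (Kext_collarExtension_le (by linarith) (by positivity)
            (Real.rpow_le_one hc0.le hc1 (by positivity)) Ω u) _
      _ = 2 * ENNReal.ofReal (c ε * (4 * (2 / c ε ^ (1 / (2 * p))) ^ p)) * M := by
          rw [ENNReal.ofReal_mul hc0.le]
          ring
      _ = _ := by rw [hrescale _ hc0]
  have hlim : Tendsto (fun ε => 2 * ENNReal.ofReal (4 * 2 ^ p * √(c ε)) * M) (𝓝[>] 0) (𝓝 0) := by
    have hsqrt := ((Real.continuous_sqrt.tendsto 0).comp
      (hc.mono_right nhdsWithin_le_nhds)).const_mul (4 * 2 ^ p)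
    simpa using ENNReal.Tendsto.mul_const (ENNReal.Tendsto.const_mul
      (ENNReal.tendsto_ofReal hsqrt) (Or.inr (ENNReal.ofNat_ne_top (n := 2)))) (Or.inr hM)
  exact tendsto_of_tendsto_of_tendsto_of_le_of_le' tendsto_const_nhds hlim
    (Eventually.of_forall fun _ => zero_le) hbound

theorem Fext_vanishes_weakly_nonlocal_general
    (n : ℕ) (s : ℝ) (hs : s ∈ Set.Ico (1/2 : ℝ) 1)
    (Ω : Set (Rn n))
    (hΩb : Bornology.IsBounded Ω) (hΩlip : HasLipschitzBoundary n Ω)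
    (W : ℝ → ℝ) (hW : DoubleWell W)
    (u : Rn n → ℝ) (hu : memX n u)
    (E : Set (Rn n)) (hphase : phaseIn n u Ω E) :
    ∃ uε : ℝ → Rn n → ℝ, (∀ ε ∈ Set.Ioi (0:ℝ), memX n (uε ε)) ∧
      TendstoL1loc n uε u ∧
      Tendsto (fun ε => FextH n s W ε (uε ε) Ω) (𝓝[>] (0:ℝ)) (𝓝 0) := by
  have hexp : 0 < 1 / (2 * ((n : ℝ) + 2 * s)) := by
    have := hs.1
    positivity
  have hδ := (tendsto_rpow_nhdsGT_zero hexp).comp (tendsto_extScale hs.1)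
  exact ⟨fun ε => collarExtension Ω u (extScale s ε ^ (1 / (2 * ((n : ℝ) + 2 * s)))),
    fun ε _ => memX_collarExtension hu Ω _, tendstoL1loc_collarExtension hδ hΩb hΩlip hu,
    tendsto_FextH_collarExtension hs.1 hΩb hW.2.2.1 hW.2.2.2.1 hphase⟩

/-- For `s ∈ [1/2,1)`, a bounded domain `Ω` with Lipschitz boundary and
a double-well potential `W`: for every `u ∈ X` with `u = χ_E − χ_{ℝⁿ∖E}` a.e. in `Ω` for
some set `E` of finite perimeter in `Ω`, there is a family `u_ε → u` in `L¹_loc(ℝⁿ)`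
with `lim_{ε→0⁺} F^ext_ε(u_ε,Ω) = 0`: the exterior nonlocal interactions disappear in
the Γ-limit in the weakly nonlocal regime. -/
theorem Fext_vanishes_weakly_nonlocal
    (n : ℕ) (hn : 1 ≤ n) (s : ℝ) (hs : s ∈ Set.Ico (1/2 : ℝ) 1)
    (Ω : Set (Rn n)) (hΩo : IsOpen Ω) (hΩconn : IsConnected Ω)
    (hΩb : Bornology.IsBounded Ω) (hΩlip : HasLipschitzBoundary n Ω)
    (W : ℝ → ℝ) (hW : DoubleWell W)
    (u : Rn n → ℝ) (hu : memX n u)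
    (E : Set (Rn n)) (hE : MeasurableSet E) (hphase : phaseIn n u Ω E)
    (hper : Per n E Ω < ⊤) :
    ∃ uε : ℝ → Rn n → ℝ, (∀ ε ∈ Set.Ioi (0:ℝ), memX n (uε ε)) ∧
      TendstoL1loc n uε u ∧
      Tendsto (fun ε => FextH n s W ε (uε ε) Ω) (𝓝[>] (0:ℝ)) (𝓝 0) :=
  Fext_vanishes_weakly_nonlocal_general n s hs Ω hΩb hΩlip W hW u hu E hphase

end
end
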